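/- Let g_s(n) denote the number of sequences q of length n over {A,C,G,T} such that μ_i(q) = 0 for all i = 1,…,s. Then for all n > s ≥ 1, g_s(n) = 2·g_s(n−1) + g_s(n−s). -/

import Mathlib

inductive Base : Type
  | A | C | G | T
deriving DecidableEq

instance instFintypeBase : Fintype Base :=
  ⟨{Base.A, Base.C, Base.G, Base.T}, fun x => by cases x <;> decide⟩

def Base.compl : Base → Base
  | .A => .T
  | .T => .A
  | .C => .G
  | .G => .C

/-- `μ_i(q)`: the number of indices `ℓ` with `ℓ + i < n` (0-based) such that
`q_ℓ` is the Watson-Crick complement of `q_{ℓ+i}`. -/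
noncomputable def mu (n i : ℕ) (q : Fin n → Base) : ℕ :=
  Set.ncard {ℓ : ℕ | ∃ h : ℓ + i < n, q ⟨ℓ, by omega⟩ = (q ⟨ℓ + i, h⟩).compl}

/-- `g_s(n)`: the number of length-`n` DNA sequences with `μ_i(q) = 0` for `i = 1,…,s`. -/
noncomputable def gcount (s n : ℕ) : ℕ :=
  Nat.card {q : Fin n → Base // ∀ i, 1 ≤ i → i ≤ s → mu n i q = 0}

/-!
Counted words are exactly those in which no letter is the complement of a letter at distance at
most `s` to its right. Prepending a letter `x` to such a word `r` of length `m ≥ 1` gives another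
one iff `x.compl` is not among the first `s` letters of `r`. Those letters contain no
complementary pair and `compl` has no fixed point, so they take one or two values, leaving `x`
three or two choices. Hence `g(m + 1) = 2 g(m) + c(m)`, where `c(m)` counts the words whose first
`s` letters agree; collapsing that constant block to a single letter identifies them with the
counted words of length `m - s + 1`.
-/

open Finset

namespace Base

@[simp]
lemma compl_compl (b : Base) : b.compl.compl = b := by cases b <;> rfl

lemma compl_ne_self (b : Base) : b.compl ≠ b := by cases b <;> decide

lemma compl_injective : Function.Injective Base.compl :=
  Function.LeftInverse.injective compl_compl

lemma card_eq_four : Fintype.card Base = 4 := rfl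

lemma card_le_two_of_compl_notMem {S : Finset Base} (h : ∀ x ∈ S, x.compl ∉ S) :
    #S ≤ 2 := by
  have hdisj : Disjoint S (S.image compl) := by
    refine disjoint_left.2 fun x hx hx' => ?_
    obtain ⟨y, hy, rfl⟩ := mem_image.1 hx'
    exact h y hy hx
  have := card_le_univ (S ∪ S.image compl)
  rw [card_union_of_disjoint hdisj, card_image_of_injective _ compl_injective, card_eq_four] at this
  omega

end Base

def ComplFree (s : ℕ) {n : ℕ} (q : Fin n → Base) : Prop :=
  ∀ a b : Fin n, a < b → (b : ℕ) ≤ a + s → q a ≠ (q b).compl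

instance (s n : ℕ) : DecidablePred (ComplFree s (n := n)) := fun _ => by
  unfold ComplFree; infer_instance

lemma mu_eq_zero_iff {n i : ℕ} {q : Fin n → Base} :
    mu n i q = 0 ↔ ∀ ℓ (h : ℓ + i < n), q ⟨ℓ, by omega⟩ ≠ (q ⟨ℓ + i, h⟩).compl := by
  have hfin : {ℓ : ℕ | ∃ h : ℓ + i < n, q ⟨ℓ, by omega⟩ = (q ⟨ℓ + i, h⟩).compl}.Finite :=
    (Set.finite_Iio n).subset fun ℓ ⟨h, _⟩ => show ℓ < n by omega
  rw [mu, Set.ncard_eq_zero hfin, Set.eq_empty_iff_forall_notMem]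
  simp

lemma forall_mu_eq_zero_iff_complFree {s n : ℕ} {q : Fin n → Base} :
    (∀ i, 1 ≤ i → i ≤ s → mu n i q = 0) ↔ ComplFree s q := by
  simp only [mu_eq_zero_iff]
  constructor
  · intro h a b hab hbs
    simpa [Nat.add_sub_cancel' hab.le] using h (b - a) (by omega) (by omega) a (by omega)
  · intro h i hi his ℓ hℓ
    exact h ⟨ℓ, by omega⟩ ⟨ℓ + i, hℓ⟩ (Fin.mk_lt_mk.2 (by omega)) (by simpa)

lemma gcount_eq_card (s n : ℕ) : gcount s n = #{q : Fin n → Base | ComplFree s q} := by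
  rw [gcount, Nat.card_congr (Equiv.subtypeEquivRight fun _ => forall_mu_eq_zero_iff_complFree),
    Nat.card_eq_fintype_card, Fintype.card_subtype]

def prefixLetters (s : ℕ) {m : ℕ} (r : Fin m → Base) : Finset Base :=
  image r {j | (j : ℕ) < s}

lemma mem_prefixLetters {s m : ℕ} {r : Fin m → Base} {x : Base} :
    x ∈ prefixLetters s r ↔ ∃ j : Fin m, (j : ℕ) < s ∧ r j = x := by
  simp [prefixLetters]

lemma complFree_cons_iff {s m : ℕ} {x : Base} {r : Fin m → Base} :
    ComplFree s (Fin.cons x r : Fin (m + 1) → Base) ↔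
      ComplFree s r ∧ x.compl ∉ prefixLetters s r := by
  constructor
  · intro h
    refine ⟨fun a b hab hbs => ?_, fun hx => ?_⟩
    · simpa using h a.succ b.succ (Fin.succ_lt_succ_iff.2 hab) (by simp; omega)
    · obtain ⟨j, hj, hjx⟩ := mem_prefixLetters.1 hx
      refine h 0 j.succ (Fin.succ_pos j) (by simpa) ?_
      simp [hjx]
  · rintro ⟨hr, hx⟩ a b hab hbs
    induction a using Fin.cases with
    | zero =>
      induction b using Fin.cases with
      | zero => exact absurd hab (lt_irrefl 0)
      | succ j =>
        intro e
        refine hx (mem_prefixLetters.2 ⟨j, by simp at hbs; omega, ?_⟩)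
        simp only [Fin.cons_zero, Fin.cons_succ] at e
        rw [e, Base.compl_compl]
    | succ i =>
      induction b using Fin.cases with
      | zero => exact absurd hab (Fin.not_lt_zero _)
      | succ j => simpa using hr i j (Fin.succ_lt_succ_iff.1 hab) (by simp at hbs; omega)

lemma card_prefixLetters_le_two {s m : ℕ} {r : Fin m → Base} (hr : ComplFree s r) :
    #(prefixLetters s r) ≤ 2 := by
  refine Base.card_le_two_of_compl_notMem fun x hx hx' => ?_
  obtain ⟨i, hi, rfl⟩ := mem_prefixLetters.1 hx
  obtain ⟨j, hj, hji⟩ := mem_prefixLetters.1 hx'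
  rcases lt_trichotomy i j with hij | rfl | hij
  · exact hr i j hij (by omega) (by rw [hji, Base.compl_compl])
  · exact Base.compl_ne_self _ hji.symm
  · exact hr j i hij (by omega) hji

lemma prefixLetters_nonempty {s m : ℕ} (hs : 0 < s) (hm : 0 < m) (r : Fin m → Base) :
    (prefixLetters s r).Nonempty :=
  ⟨r ⟨0, hm⟩, mem_prefixLetters.2 ⟨⟨0, hm⟩, hs, rfl⟩⟩

lemma card_prefixLetters_le_one_iff {s m : ℕ} {r : Fin m → Base} :
    #(prefixLetters s r) ≤ 1 ↔ ∀ i j : Fin m, (i : ℕ) < s → (j : ℕ) < s → r i = r j := by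
  simp only [card_le_one, mem_prefixLetters]
  constructor
  · intro h i j hi hj
    exact h _ ⟨i, hi, rfl⟩ _ ⟨j, hj, rfl⟩
  · rintro h _ ⟨i, hi, rfl⟩ _ ⟨j, hj, rfl⟩
    exact h i j hi hj

lemma card_compl_notMem_prefixLetters (s : ℕ) {m : ℕ} (r : Fin m → Base) :
    #{x : Base | x.compl ∉ prefixLetters s r} = 4 - #(prefixLetters s r) := by
  have : ({x : Base | x.compl ∉ prefixLetters s r} : Finset Base) =
      ((prefixLetters s r).image Base.compl)ᶜ := by
    ext x
    simp only [mem_filter, mem_univ, true_and, mem_compl, mem_image]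
    refine not_congr ⟨fun hx => ⟨_, hx, Base.compl_compl x⟩, ?_⟩
    rintro ⟨y, hy, rfl⟩
    rwa [Base.compl_compl]
  rw [this, card_compl, card_image_of_injective _ Base.compl_injective, Base.card_eq_four]

lemma card_complFree_succ {s m : ℕ} (hs : 0 < s) (hm : 0 < m) :
    #{q : Fin (m + 1) → Base | ComplFree s q} =
      2 * #{r : Fin m → Base | ComplFree s r} +
        #{r : Fin m → Base | ComplFree s r ∧ #(prefixLetters s r) ≤ 1} := by
  have hcons : #{q : Fin (m + 1) → Base | ComplFree s q} =
      ∑ r : Fin m → Base with ComplFree s r, (4 - #(prefixLetters s r)) := by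
    rw [card_filter, ← (Fin.consEquiv fun _ => Base).sum_comp, Fintype.sum_prod_type, sum_comm,
      sum_filter]
    refine sum_congr rfl fun r _ => ?_
    simp only [Fin.consEquiv, Equiv.coe_fn_mk, complFree_cons_iff]
    by_cases hr : ComplFree s r
    · simp only [hr, true_and, if_true, ← card_compl_notMem_prefixLetters, card_filter]
    · simp [hr]
  have hchoices : ∀ r ∈ ({r : Fin m → Base | ComplFree s r} : Finset _),
      4 - #(prefixLetters s r) = 2 + if #(prefixLetters s r) ≤ 1 then 1 else 0 := by
    intro r hr
    have := card_prefixLetters_le_two (mem_filter.1 hr).2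
    have := (prefixLetters_nonempty hs hm r).card_pos
    split_ifs <;> omega
  rw [hcons, sum_congr rfl hchoices, sum_add_distrib, sum_const, smul_eq_mul, mul_comm,
    sum_boole, filter_filter, Nat.cast_id]

lemma card_complFree_prefixLetters_le_one (t k : ℕ) (hk : 0 < k) :
    #{q : Fin (t + k) → Base | ComplFree (t + 1) q ∧ #(prefixLetters (t + 1) q) ≤ 1} =
      #{r : Fin k → Base | ComplFree (t + 1) r} := by
  -- The inverse relies on truncated subtraction: every index `j ≤ t` reads the letter `r 0`.
  refine card_nbij' (fun q => q ∘ Fin.natAdd t) (fun r j => r ⟨j - t, by omega⟩)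
    (fun q hq => ?_) (fun r hr => ?_) (fun q hq => ?_) (fun r _ => ?_)
  · simp only [mem_coe, mem_filter, mem_univ, true_and] at hq ⊢
    exact fun a b hab hbs => hq.1 _ _ (by simpa) (by simp; omega)
  · simp only [mem_coe, mem_filter, mem_univ, true_and] at hr ⊢
    refine ⟨fun a b hab hbs => ?_, card_prefixLetters_le_one_iff.2 fun i j hi hj => ?_⟩
    · by_cases hbt : (b : ℕ) ≤ t
      · have hab' : (⟨a - t, by omega⟩ : Fin k) = ⟨b - t, by omega⟩ := Fin.ext (by simp; omega)
        dsimp only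
        rw [hab']
        exact (Base.compl_ne_self _).symm
      · exact hr _ _ (Fin.mk_lt_mk.2 (by omega)) (by simp; omega)
    · exact congrArg r (Fin.ext (by simp; omega))
  · simp only [mem_coe, mem_filter, mem_univ, true_and, card_prefixLetters_le_one_iff] at hq
    funext j
    by_cases hjt : (j : ℕ) < t
    · exact hq.2 _ _ (by simp; omega) (by omega)
    · exact congrArg q (Fin.ext (by simp; omega))
  · funext i
    exact congrArg r (Fin.ext (by simp))

/-- For all `n > s ≥ 1`, `g_s(n) = 2 g_s(n-1) + g_s(n-s)`. -/
theorem stmt2 (s n : ℕ) (hs : 1 ≤ s) (hn : s < n) :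
    gcount s n = 2 * gcount s (n - 1) + gcount s (n - s) := by
  obtain ⟨t, rfl⟩ : ∃ t, s = t + 1 := ⟨s - 1, by omega⟩
  obtain ⟨k, rfl⟩ : ∃ k, n = t + k + 1 := ⟨n - (t + 1), by omega⟩
  have hk : 0 < k := by omega
  rw [gcount_eq_card, gcount_eq_card, gcount_eq_card, Nat.add_sub_cancel,
    show t + k + 1 - (t + 1) = k by omega, card_complFree_succ t.succ_pos (by omega),
    card_complFree_prefixLetters_le_one t k hk]
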